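/- Let B = ℂ[x,y,z] be the polynomial ring in three variables and let δ be the ℂ-derivation of B with δ(x) = 0, δ(y) = −2z, δ(z) = x². Then δ is locally nilpotent, and its kernel is the ℂ-subalgebra ℂ[x, x²y + z²] generated by x and x²y + z²; moreover x and x²y + z² are algebraically independent over ℂ, so ker δ is a polynomial ring in two variables over ℂ. -/
import Mathlib

open MvPolynomial

noncomputable section Stmt16Aux

abbrev B3 : Type := MvPolynomial (Fin 3) ℂ

def S16.phi : B3 →ₐ[ℂ] B3 := aeval ![X 0, (X 0)^2 * X 1 + (X 2)^2, X 2]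
def S16.psi1 : B3 →ₐ[ℂ] B3 := aeval ![X 0, (X 0)^2 * X 1, X 2]
def S16.psi2 : B3 →ₐ[ℂ] B3 := aeval ![X 0, X 1 + (X 2)^2, X 2]
def S16.psi2' : B3 →ₐ[ℂ] B3 := aeval ![X 0, X 1 - (X 2)^2, X 2]
def S16.phi2 : MvPolynomial (Fin 2) ℂ →ₐ[ℂ] B3 := aeval ![X 0, (X 0)^2 * X 1 + (X 2)^2]
def S16.chi : MvPolynomial (Fin 2) ℂ →ₐ[ℂ] B3 := aeval ![0, (X 2 : B3)^2]

lemma S16.phi_eq : S16.phi = S16.psi1.comp S16.psi2 := by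
  apply MvPolynomial.algHom_ext
  intro i
  fin_cases i <;> simp [S16.phi, S16.psi1, S16.psi2]

lemma S16.psi2_inj : Function.Injective S16.psi2 := by
  have h : S16.psi2'.comp S16.psi2 = AlgHom.id ℂ B3 := by
    apply MvPolynomial.algHom_ext
    intro i
    fin_cases i <;> simp [S16.psi2, S16.psi2']
  intro a b hab
  have := congrArg S16.psi2' hab
  simpa [← AlgHom.comp_apply, h] using this

def S16.T (m : Fin 3 →₀ ℕ) : Fin 3 →₀ ℕ := m + Finsupp.single 0 (2 * m 1)

lemma S16.T_inj : Function.Injective S16.T := by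
  intro m m' h
  have h1 : m 1 = m' 1 := by
    have := DFunLike.congr_fun h 1
    simpa [S16.T, Finsupp.add_apply, Finsupp.single_apply] using this
  have h' := h
  unfold S16.T at h'
  rw [h1] at h'
  exact add_right_cancel h'

lemma S16.psi1_monomial (m : Fin 3 →₀ ℕ) (c : ℂ) :
    S16.psi1 (monomial m c) = monomial (S16.T m) c := by
  rw [S16.psi1, aeval_monomial, monomial_eq]
  rw [Finsupp.prod_fintype _ _ (fun i => pow_zero _),
    Finsupp.prod_fintype _ _ (fun i => pow_zero _)]
  rw [Fin.prod_univ_three, Fin.prod_univ_three]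
  have h0 : S16.T m 0 = m 0 + 2 * m 1 := by simp [S16.T]
  have h1 : S16.T m 1 = m 1 := by simp [S16.T, Finsupp.single_apply]
  have h2 : S16.T m 2 = m 2 := by simp [S16.T, Finsupp.single_apply]
  rw [h0, h1, h2]
  simp only [Matrix.cons_val_zero, Matrix.cons_val_one, Matrix.head_cons,
    Matrix.cons_val_two, Matrix.tail_cons, algebraMap_eq]
  ring

lemma S16.psi1_inj : Function.Injective S16.psi1 := by
  have key : ∀ p : B3, S16.psi1 p = 0 → p = 0 := by
    intro p hp
    rw [p.as_sum, map_sum] at hp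
    simp only [S16.psi1_monomial] at hp
    ext m
    by_cases hm : m ∈ p.support
    · have := congrArg (coeff (S16.T m)) hp
      rw [coeff_sum] at this
      rw [Finset.sum_eq_single m (fun m' _ hne => by
          rw [coeff_monomial, if_neg (fun h => hne (S16.T_inj h))])
        (fun h => absurd hm h) ] at this
      simpa [coeff_monomial] using this
    · simp [MvPolynomial.notMem_support_iff.mp hm]
  intro a b hab
  have : S16.psi1 (a - b) = 0 := by rw [map_sub, hab, sub_self]
  exact sub_eq_zero.mp (key _ this)

lemma S16.phi_X0 : S16.phi (X 0) = X 0 := by simp [S16.phi]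
lemma S16.phi_X1 : S16.phi (X 1) = (X 0)^2 * X 1 + (X 2)^2 := by simp [S16.phi]
lemma S16.phi_X2 : S16.phi (X 2) = X 2 := by simp [S16.phi]
lemma S16.phi_C (a : ℂ) : S16.phi (C a) = C a := by
  rw [show (C a : B3) = algebraMap ℂ B3 a from rfl]; exact S16.phi.commutes a

lemma S16.clear (b : B3) : ∃ (N : ℕ) (p : B3), (X 0) ^ N * b = S16.phi p := by
  induction b using MvPolynomial.induction_on with
  | C a => exact ⟨0, C a, by rw [S16.phi_C, pow_zero, one_mul]⟩
  | add p q hp hq =>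
    obtain ⟨N1, p1, h1⟩ := hp
    obtain ⟨N2, p2, h2⟩ := hq
    refine ⟨N1 + N2, (X 0) ^ N2 * p1 + (X 0) ^ N1 * p2, ?_⟩
    rw [map_add, map_mul, map_mul, map_pow, map_pow, S16.phi_X0, ← h1, ← h2]
    ring
  | mul_X p i hp =>
    obtain ⟨N, q, h⟩ := hp
    fin_cases i <;>
      simp only [Fin.isValue, Fin.zero_eta, Fin.mk_one, Fin.reduceFinMk]
    · exact ⟨N, q * X 0, by rw [map_mul, S16.phi_X0, ← h]; ring⟩
    · refine ⟨N + 2, q * (X 1 - (X 2)^2), ?_⟩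
      rw [map_mul, map_sub, map_pow, S16.phi_X1, S16.phi_X2, ← h]
      ring
    · exact ⟨N, q * X 2, by rw [map_mul, S16.phi_X2, ← h]; ring⟩

lemma S16.phi_deriv (δ : Derivation ℂ B3 B3)
    (hx : δ (X 0) = 0) (hy : δ (X 1) = -2 * X 2) (hz : δ (X 2) = (X 0) ^ 2) :
    ∀ p : B3, δ (S16.phi p) = (X 0)^2 * S16.phi (pderiv 2 p) := by
  have hx2 : δ ((X 0 : B3) ^ 2) = 0 := by rw [Derivation.leibniz_pow, hx]; simp
  have hw : δ ((X 0)^2 * X 1 + (X 2)^2 : B3) = 0 := by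
    rw [map_add, Derivation.leibniz, hx2, hy, Derivation.leibniz_pow, hz]
    simp only [smul_eq_mul, nsmul_eq_mul, smul_zero, mul_zero]
    ring
  intro p
  induction p using MvPolynomial.induction_on with
  | C a =>
    have hda : δ (C a : B3) = 0 := by
      rw [show (C a : B3) = algebraMap ℂ B3 a from rfl]
      exact Derivation.map_algebraMap δ a
    rw [S16.phi_C, hda, pderiv_C]
    simp
  | add p q hp hq =>
    rw [map_add, map_add, hp, hq, map_add, map_add]
    ring
  | mul_X p i hp =>
    rw [map_mul, Derivation.leibniz, smul_eq_mul, smul_eq_mul, hp, Derivation.leibniz,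
      smul_eq_mul, smul_eq_mul, map_add, map_mul]
    fin_cases i <;>
      simp only [Fin.isValue, Fin.zero_eta, Fin.mk_one, Fin.reduceFinMk]
    · rw [S16.phi_X0, hx, pderiv_X_of_ne (by decide), map_zero, map_mul, S16.phi_X0]; ring
    · rw [S16.phi_X1, hw, pderiv_X_of_ne (by decide), map_zero, map_mul, S16.phi_X1]; ring
    · rw [S16.phi_X2, hz, pderiv_X_self, map_one, map_mul, S16.phi_X2]; ring


lemma S16.phi_inj : Function.Injective S16.phi := by
  intro a b hab
  have h : S16.psi1 (S16.psi2 a) = S16.psi1 (S16.psi2 b) := by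
    rw [← AlgHom.comp_apply, ← AlgHom.comp_apply, ← S16.phi_eq, hab]
  exact S16.psi2_inj (S16.psi1_inj h)

lemma S16.coeff_eq_zero (p : B3) (h : pderiv 2 p = 0) (m : Fin 3 →₀ ℕ) (hm : m 2 ≠ 0) :
    coeff m p = 0 := by
  by_cases hmem : m ∈ p.support
  swap
  · exact notMem_support_iff.mp hmem
  have hle : Finsupp.single (2 : Fin 3) 1 ≤ m := by
    rw [Finsupp.single_le_iff]; omega
  set m' := m - Finsupp.single 2 1 with hm'def
  have hrep : pderiv 2 p
      = ∑ v ∈ p.support, monomial (v - Finsupp.single 2 1) (coeff v p * v 2) := by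
    conv_lhs => rw [p.as_sum]
    rw [map_sum]
    exact Finset.sum_congr rfl fun v _ => pderiv_monomial
  have h0 : coeff m' (pderiv 2 p) = 0 := by rw [h, coeff_zero]
  rw [hrep, coeff_sum] at h0
  rw [Finset.sum_eq_single m (fun v _ hvm => ?_) (fun hc => absurd hmem hc)] at h0
  · rw [coeff_monomial, if_pos rfl] at h0
    have : (m 2 : ℂ) ≠ 0 := Nat.cast_ne_zero.mpr hm
    exact (mul_eq_zero.mp h0).resolve_right this
  · rcases Nat.eq_zero_or_pos (v 2) with hv | hv
    · simp [hv]
    · rw [coeff_monomial, if_neg]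
      intro heq
      apply hvm
      have hvle : Finsupp.single (2 : Fin 3) 1 ≤ v := by
        rw [Finsupp.single_le_iff]; omega
      have := congrArg (· + Finsupp.single (2 : Fin 3) 1) heq
      simpa [tsub_add_cancel_of_le hvle, tsub_add_cancel_of_le hle, hm'def] using this

lemma S16.phi_mem (p : B3) (h : pderiv 2 p = 0) :
    S16.phi p ∈ Algebra.adjoin ℂ {(X 0 : B3), (X 0) ^ 2 * X 1 + (X 2) ^ 2} := by
  have hp : p ∈ supported ℂ ({0, 1} : Set (Fin 3)) := by
    rw [mem_supported]
    intro i hi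
    obtain ⟨d, hd, hid⟩ := (mem_vars i).mp hi
    by_cases h2 : i = (2 : Fin 3)
    · exfalso
      subst h2
      have : d 2 ≠ 0 := Finsupp.mem_support_iff.mp hid
      exact (Finsupp.mem_support_iff.mp hd) (S16.coeff_eq_zero p h d this)
    · fin_cases i <;> simp_all
  rw [supported] at hp
  have : S16.phi p ∈ (Algebra.adjoin ℂ (X '' ({0,1} : Set (Fin 3)))).map S16.phi :=
    Subalgebra.mem_map.mpr ⟨p, hp, rfl⟩
  rw [AlgHom.map_adjoin] at this
  rw [Set.image_insert_eq, Set.image_singleton, Set.image_insert_eq, Set.image_singleton,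
    S16.phi_X0, S16.phi_X1] at this
  exact this

lemma S16.iter_mul (δ : Derivation ℂ B3 B3) :
    ∀ k n m (a b : B3), n + m ≤ k →
      ((δ : B3 →ₗ[ℂ] B3) ^ n) a = 0 → ((δ : B3 →ₗ[ℂ] B3) ^ m) b = 0 →
      ((δ : B3 →ₗ[ℂ] B3) ^ (n + m - 1)) (a * b) = 0 := by
  set D := (δ : B3 →ₗ[ℂ] B3) with hD
  intro k
  induction k with
  | zero =>
    intro n m a b hnm ha hb
    obtain ⟨rfl, rfl⟩ : n = 0 ∧ m = 0 := by omega
    simp only [pow_zero, Module.End.one_apply] at ha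
    simp [ha]
  | succ k ih =>
    intro n m a b hnm ha hb
    match n, m with
    | 0, m =>
      simp only [pow_zero, Module.End.one_apply] at ha
      simp [ha]
    | n+1, 0 =>
      simp only [pow_zero, Module.End.one_apply] at hb
      simp [hb]
    | n+1, m+1 =>
      have hsum : n + 1 + (m + 1) - 1 = (n + m + 1) := by omega
      rw [hsum, pow_succ, Module.End.mul_apply]
      have hDab : D (a * b) = a * D b + b * D a := by
        show δ (a * b) = a * δ b + b * δ a
        rw [Derivation.leibniz]; simp [smul_eq_mul]
      rw [hDab, map_add]
      have h1 : (D ^ (n + m)) (a * D b) = 0 := by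
        have := ih (n+1) m a (D b) (by omega) ha
          (by rw [← Module.End.mul_apply, ← pow_succ]; exact hb)
        simpa using this
      have h2 : (D ^ (n + m)) (b * D a) = 0 := by
        have := ih (m+1) n b (D a) (by omega) hb
          (by rw [← Module.End.mul_apply, ← pow_succ]; exact ha)
        have hexp : m + 1 + n - 1 = n + m := by omega
        rwa [hexp] at this
      rw [h1, h2, add_zero]

lemma S16.locnil (δ : Derivation ℂ B3 B3)
    (hx : δ (X 0) = 0) (hy : δ (X 1) = -2 * X 2) (hz : δ (X 2) = (X 0) ^ 2) :
    ∀ b : B3, ∃ n : ℕ, ((δ : B3 →ₗ[ℂ] B3) ^ n) b = 0 := by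
  set D := (δ : B3 →ₗ[ℂ] B3) with hD
  have hDeq : ∀ a : B3, D a = δ a := fun a => rfl
  have hX : ∀ i : Fin 3, (D ^ 3) (X i) = 0 := by
    have hx2 : δ ((X 0 : B3) ^ 2) = 0 := by
      rw [Derivation.leibniz_pow, hx]; simp
    intro i
    fin_cases i
    · show D (D (D (X 0))) = 0
      simp only [hDeq]
      rw [hx]; simp
    · show D (D (D (X 1))) = 0
      simp only [hDeq]
      rw [hy]
      have : ((-2 : B3) * X 2) = ((-2 : ℂ)) • (X 2 : B3) := by
        rw [MvPolynomial.smul_eq_C_mul, map_neg, map_ofNat]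
      rw [this]
      rw [Derivation.map_smul, hz]
      rw [Derivation.map_smul, hx2]
      simp
    · show D (D (D (X 2))) = 0
      simp only [hDeq]
      rw [hz, hx2]
      simp
  intro b
  induction b using MvPolynomial.induction_on with
  | C a =>
    refine ⟨1, ?_⟩
    rw [pow_one]
    show δ (C a) = 0
    rw [← MvPolynomial.algebraMap_eq]
    exact Derivation.map_algebraMap δ a
  | add p q hp hq =>
    obtain ⟨n, hn⟩ := hp
    obtain ⟨m, hm⟩ := hq
    refine ⟨n + m, ?_⟩
    rw [map_add]
    have h1 : (D ^ (n + m)) p = 0 := by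
      rw [add_comm, pow_add, Module.End.mul_apply, hn, map_zero]
    have h2 : (D ^ (n + m)) q = 0 := by
      rw [pow_add, Module.End.mul_apply, hm, map_zero]
    rw [h1, h2, add_zero]
  | mul_X p i hp =>
    obtain ⟨n, hn⟩ := hp
    exact ⟨n + 3 - 1, S16.iter_mul δ (n + 3) n 3 p (X i) le_rfl hn (hX i)⟩

lemma S16.adjoin_eq_range :
    Algebra.adjoin ℂ {(X 0 : B3), (X 0) ^ 2 * X 1 + (X 2) ^ 2} = S16.phi2.range := by
  have hr : Set.range ![(X 0 : B3), (X 0) ^ 2 * X 1 + (X 2) ^ 2]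
      = {(X 0 : B3), (X 0) ^ 2 * X 1 + (X 2) ^ 2} := by
    ext a
    simp [Fin.exists_fin_two]; tauto
  rw [← hr, Algebra.adjoin_range_eq_range_aeval]
  rfl

lemma S16.chi_kills (q : MvPolynomial (Fin 2) ℂ)
    (hq : ∀ v ∈ q.support, v 0 = 0) (h : S16.chi q = 0) : q = 0 := by
  have hrep : S16.chi q = ∑ v ∈ q.support, monomial (Finsupp.single 2 (2 * v 1)) (coeff v q) := by
    conv_lhs => rw [q.as_sum]
    rw [map_sum]
    refine Finset.sum_congr rfl fun v hv => ?_
    rw [S16.chi, aeval_monomial, Finsupp.prod_fintype _ _ (fun i => pow_zero _),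
      Fin.prod_univ_two]
    simp only [Matrix.cons_val_zero, Matrix.cons_val_one, Matrix.head_cons]
    rw [hq v hv, pow_zero, one_mul, ← pow_mul, X_pow_eq_monomial, algebraMap_eq,
      C_mul_monomial, mul_one]
  ext m
  rw [coeff_zero]
  by_cases hmem : m ∈ q.support
  swap
  · exact notMem_support_iff.mp hmem
  have h0 : coeff (Finsupp.single (2 : Fin 3) (2 * m 1)) (S16.chi q) = 0 := by
    rw [h, coeff_zero]
  rw [hrep, coeff_sum] at h0
  rw [Finset.sum_eq_single m (fun v hv hvm => ?_) (fun hc => absurd hmem hc)] at h0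
  · rwa [coeff_monomial, if_pos rfl] at h0
  · rw [coeff_monomial, if_neg]
    intro heq
    apply hvm
    have h1 : v 1 = m 1 := by
      have := Finsupp.single_injective (2 : Fin 3) heq
      omega
    have h0' : v 0 = m 0 := by rw [hq v hv, hq m hmem]
    ext i
    fin_cases i
    · exact h0'
    · exact h1

lemma S16.descent (d : B3)
    (h : X 0 * d ∈ Algebra.adjoin ℂ {(X 0 : B3), (X 0) ^ 2 * X 1 + (X 2) ^ 2}) :
    d ∈ Algebra.adjoin ℂ {(X 0 : B3), (X 0) ^ 2 * X 1 + (X 2) ^ 2} := by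
  rw [S16.adjoin_eq_range] at h ⊢
  obtain ⟨q, hq⟩ := h
  have hq' : S16.phi2 q = X 0 * d := hq
  set q1 := q.divMonomial (Finsupp.single 0 1) with hq1
  set q0 := q.modMonomial (Finsupp.single 0 1) with hq0
  have hdecomp : X 0 * q1 + q0 = q := q.divMonomial_add_modMonomial_single 0
  have hchiq : S16.chi q = 0 := by
    have hcomp : ∀ r : MvPolynomial (Fin 2) ℂ,
        (aeval ![0, X 1, X 2] : B3 →ₐ[ℂ] B3) (S16.phi2 r) = S16.chi r := by
      intro r
      rw [show ∀ s, (aeval ![0, X 1, X 2] : B3 →ₐ[ℂ] B3) (S16.phi2 s) =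
        ((aeval ![0, X 1, X 2] : B3 →ₐ[ℂ] B3).comp S16.phi2) s from fun s => rfl]
      congr 1
      apply MvPolynomial.algHom_ext
      intro i
      fin_cases i <;> simp [S16.phi2, S16.chi]
    have := hcomp q
    rw [hq', map_mul] at this
    have hx0 : (aeval ![0, X 1, X 2] : B3 →ₐ[ℂ] B3) (X 0) = 0 := by simp
    rw [hx0, zero_mul] at this
    exact this.symm
  have hchiq0 : S16.chi q0 = 0 := by
    have := congrArg S16.chi hdecomp
    rw [map_add, map_mul, show S16.chi (X 0) = 0 by simp [S16.chi], zero_mul, zero_add] at this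
    rw [this, hchiq]
  have hq00 : q0 = 0 := by
    refine S16.chi_kills q0 (fun v hv => ?_) hchiq0
    by_contra hne
    have hle : Finsupp.single (0 : Fin 2) 1 ≤ v := by
      rw [Finsupp.single_le_iff]; omega
    exact (Finsupp.mem_support_iff.mp hv) (q.coeff_modMonomial_of_le hle)
  have : X 0 * d = X 0 * S16.phi2 q1 := by
    rw [← hq', ← hdecomp, hq00, add_zero, map_mul]
    congr 1
    simp [S16.phi2]
  exact ⟨q1, (mul_left_cancel₀ (X_ne_zero 0) this).symm⟩

end Stmt16Aux

/-- Let `B = ℂ[x,y,z]` and let `δ` be the ℂ-derivation of `B` with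
`δ(x) = 0`, `δ(y) = −2z`, `δ(z) = x²` (a derivation of a polynomial ring is determined
by its values on the variables).  Then `δ` is locally nilpotent, its kernel is the
ℂ-subalgebra generated by `x` and `x²y + z²`, and `x`, `x²y + z²` are algebraically
independent over ℂ, so the kernel is a polynomial ring in two variables over ℂ. -/
theorem stmt16
    (δ : Derivation ℂ (MvPolynomial (Fin 3) ℂ) (MvPolynomial (Fin 3) ℂ))
    (hx : δ (X 0) = 0)
    (hy : δ (X 1) = -2 * X 2)
    (hz : δ (X 2) = (X 0) ^ 2) :
    (∀ b : MvPolynomial (Fin 3) ℂ, ∃ n : ℕ,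
        ((δ : MvPolynomial (Fin 3) ℂ →ₗ[ℂ] MvPolynomial (Fin 3) ℂ) ^ n) b = 0) ∧
    (∀ b : MvPolynomial (Fin 3) ℂ,
        δ b = 0 ↔ b ∈ Algebra.adjoin ℂ {X 0, (X 0) ^ 2 * X 1 + (X 2) ^ 2}) ∧
    AlgebraicIndependent ℂ ![(X 0 : MvPolynomial (Fin 3) ℂ),
        (X 0) ^ 2 * X 1 + (X 2) ^ 2] ∧
    Nonempty (↥(Algebra.adjoin ℂ
        {(X 0 : MvPolynomial (Fin 3) ℂ), (X 0) ^ 2 * X 1 + (X 2) ^ 2})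
      ≃ₐ[ℂ] MvPolynomial (Fin 2) ℂ) := by
  have hAI : AlgebraicIndependent ℂ ![(X 0 : B3), (X 0) ^ 2 * X 1 + (X 2) ^ 2] := by
    have h3 : AlgebraicIndependent ℂ ![(X 0 : B3), (X 0) ^ 2 * X 1 + (X 2) ^ 2, X 2] :=
      algebraicIndependent_iff_injective_aeval.mpr S16.phi_inj
    have h2 := h3.comp (Fin.castSucc) (Fin.castSucc_injective 2)
    convert h2 using 1
    funext i
    fin_cases i <;> rfl
  have hw : δ ((X 0)^2 * X 1 + (X 2)^2 : B3) = 0 := by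
    have hx2 : δ ((X 0 : B3) ^ 2) = 0 := by rw [Derivation.leibniz_pow, hx]; simp
    rw [map_add, Derivation.leibniz, hx2, hy, Derivation.leibniz_pow, hz]
    simp only [smul_eq_mul, nsmul_eq_mul, smul_zero, mul_zero]
    ring
  refine ⟨S16.locnil δ hx hy hz, fun b => ⟨fun hb => ?_, fun hb => ?_⟩, hAI, ?_⟩
  · -- δ b = 0 → b ∈ adjoin
    obtain ⟨N, p, hNp⟩ := S16.clear b
    have hδxN : δ (X 0 ^ N * b) = 0 := by
      rw [Derivation.leibniz, hb, Derivation.leibniz_pow, hx]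
      simp
    have h2 : (X 0 : B3)^2 * S16.phi (pderiv 2 p) = 0 := by
      rw [← S16.phi_deriv δ hx hy hz, ← hNp, hδxN]
    have hφ0 : S16.phi (pderiv 2 p) = 0 :=
      (mul_eq_zero.mp h2).resolve_left (pow_ne_zero _ (X_ne_zero 0))
    have hp2 : pderiv 2 p = 0 := S16.phi_inj (by rw [hφ0, map_zero])
    have hmem : (X 0 : B3) ^ N * b ∈
        Algebra.adjoin ℂ {(X 0 : B3), (X 0) ^ 2 * X 1 + (X 2) ^ 2} := by
      rw [hNp]; exact S16.phi_mem p hp2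
    have hdesc : ∀ (n : ℕ) (c : B3),
        (X 0 : B3) ^ n * c ∈ Algebra.adjoin ℂ {(X 0 : B3), (X 0) ^ 2 * X 1 + (X 2) ^ 2} →
        c ∈ Algebra.adjoin ℂ {(X 0 : B3), (X 0) ^ 2 * X 1 + (X 2) ^ 2} := by
      intro n
      induction n with
      | zero => intro c hc; simpa using hc
      | succ n ih =>
        intro c hc
        apply ih
        apply S16.descent
        have he : (X 0 : B3) * (X 0 ^ n * c) = X 0 ^ (n + 1) * c := by ring
        rw [he]
        exact hc
    exact hdesc N b hmem
  · -- b ∈ adjoin → δ b = 0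
    induction hb using Algebra.adjoin_induction with
    | mem u hu =>
      rcases hu with h | h
      · rw [h]; exact hx
      · rw [h]; exact hw
    | algebraMap r => exact Derivation.map_algebraMap δ r
    | add u v _ _ hu hv => rw [map_add, hu, hv, add_zero]
    | mul u v _ _ hu hv => rw [Derivation.leibniz, hu, hv, smul_zero, smul_zero, add_zero]
  · -- the equiv
    have hr : Set.range ![(X 0 : B3), (X 0) ^ 2 * X 1 + (X 2) ^ 2]
        = {(X 0 : B3), (X 0) ^ 2 * X 1 + (X 2) ^ 2} := by
      ext a
      simp [Fin.exists_fin_two]; tauto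
    exact ⟨(hr ▸ hAI.aevalEquiv).symm⟩
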